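/- For every positive integer n, the group with presentation ⟨a, b, c, d, e, f | a = e^n c e^{-n}, e = c^n d c^{-n}, c = d^n e d^{-n}, f = d^n b d^{-n}, b = f^n d f^{-n}, a = b^n f b^{-n}⟩ (the n-th generalized knot group of the square knot from its standard six-arc diagram) is isomorphic to the group with presentation ⟨b, d, e | b d^n b^n = d^n b^n d, e d^n e^n = d^n e^n d, e^n d^n e d^{-n} e^{-n} = b^n d^n b d^{-n} b^{-n}⟩. -/

import Mathlib

/-!
Tietze transformations. The relations `c = dⁿ e d⁻ⁿ`, `f = dⁿ b d⁻ⁿ` and `a = eⁿ c e⁻ⁿ` eliminate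
`a`, `c`, `f`. Since `(dⁿ e d⁻ⁿ)ⁿ = dⁿ eⁿ d⁻ⁿ`, the relation `e = cⁿ d c⁻ⁿ` then reads
`e = dⁿ eⁿ d e⁻ⁿ d⁻ⁿ`, i.e. `e dⁿ eⁿ = dⁿ eⁿ d`; likewise `b = fⁿ d f⁻ⁿ` becomes `b dⁿ bⁿ = dⁿ bⁿ d`,
and the two expressions for `a` give the third relation.
-/

/-- Relators of the n-th generalized knot group of the square knot from its standard
six-arc diagram: ⟨a, b, c, d, e, f | a = eⁿ c e⁻ⁿ, e = cⁿ d c⁻ⁿ, c = dⁿ e d⁻ⁿ,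
f = dⁿ b d⁻ⁿ, b = fⁿ d f⁻ⁿ, a = bⁿ f b⁻ⁿ⟩, with a, b, c, d, e, f = 0, 1, 2, 3, 4, 5. -/
def squareKnotDiagRels (n : ℕ) : Set (FreeGroup (Fin 6)) :=
  let a : FreeGroup (Fin 6) := FreeGroup.of 0
  let b : FreeGroup (Fin 6) := FreeGroup.of 1
  let c : FreeGroup (Fin 6) := FreeGroup.of 2
  let d : FreeGroup (Fin 6) := FreeGroup.of 3
  let e : FreeGroup (Fin 6) := FreeGroup.of 4
  let f : FreeGroup (Fin 6) := FreeGroup.of 5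
  {a * (e ^ n * c * (e ^ n)⁻¹)⁻¹,
   e * (c ^ n * d * (c ^ n)⁻¹)⁻¹,
   c * (d ^ n * e * (d ^ n)⁻¹)⁻¹,
   f * (d ^ n * b * (d ^ n)⁻¹)⁻¹,
   b * (f ^ n * d * (f ^ n)⁻¹)⁻¹,
   a * (b ^ n * f * (b ^ n)⁻¹)⁻¹}

/-- Relators of ⟨b, d, e | b dⁿ bⁿ = dⁿ bⁿ d, e dⁿ eⁿ = dⁿ eⁿ d,
eⁿ dⁿ e d⁻ⁿ e⁻ⁿ = bⁿ dⁿ b d⁻ⁿ b⁻ⁿ⟩, with b, d, e = 0, 1, 2. -/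
def GnSKRels (n : ℕ) : Set (FreeGroup (Fin 3)) :=
  let b : FreeGroup (Fin 3) := FreeGroup.of 0
  let d : FreeGroup (Fin 3) := FreeGroup.of 1
  let e : FreeGroup (Fin 3) := FreeGroup.of 2
  {b * d ^ n * b ^ n * (d ^ n * b ^ n * d)⁻¹,
   e * d ^ n * e ^ n * (d ^ n * e ^ n * d)⁻¹,
   e ^ n * d ^ n * e * (d ^ n)⁻¹ * (e ^ n)⁻¹ * (b ^ n * d ^ n * b * (d ^ n)⁻¹ * (b ^ n)⁻¹)⁻¹}


section ConjugatePower

variable {G : Type*} [Group G]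

theorem eq_conj_pow_conj_iff (x y : G) (n : ℕ) :
    x = (y ^ n * x * (y ^ n)⁻¹) ^ n * y * ((y ^ n * x * (y ^ n)⁻¹) ^ n)⁻¹ ↔
      x * y ^ n * x ^ n = y ^ n * x ^ n * y := by
  have key : y ^ n * x ^ n * (y ^ n)⁻¹ * y * (y ^ n * x ^ n * (y ^ n)⁻¹)⁻¹ * (y ^ n * x ^ n) =
      y ^ n * x ^ n * y := by group
  rw [conj_pow, ← mul_left_inj (y ^ n * x ^ n), key, mul_assoc x]

theorem mul_pow_mul_pow_eq_of_eq_conj {x y z : G} {n : ℕ} (hz : z = y ^ n * x * (y ^ n)⁻¹)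
    (hx : x = z ^ n * y * (z ^ n)⁻¹) : x * y ^ n * x ^ n = y ^ n * x ^ n * y :=
  (eq_conj_pow_conj_iff x y n).1 (hz ▸ hx)

end ConjugatePower

namespace SquareKnot

open PresentedGroup

section Lifts

variable {G : Type*} [Group G] {n : ℕ}

def liftDiag {a b c d e f : G} (ha : a = e ^ n * c * (e ^ n)⁻¹) (he : e = c ^ n * d * (c ^ n)⁻¹)
    (hc : c = d ^ n * e * (d ^ n)⁻¹) (hf : f = d ^ n * b * (d ^ n)⁻¹)
    (hb : b = f ^ n * d * (f ^ n)⁻¹) (ha' : a = b ^ n * f * (b ^ n)⁻¹) :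
    PresentedGroup (squareKnotDiagRels n) →* G :=
  toGroup (f := ![a, b, c, d, e, f]) <| by
    simp only [squareKnotDiagRels, Set.mem_insert_iff, Set.mem_singleton_iff, forall_eq_or_imp,
      forall_eq, map_mul, map_inv, map_pow, FreeGroup.lift_apply_of, mul_inv_eq_one]
    exact ⟨ha, he, hc, hf, hb, ha'⟩

@[simp]
theorem liftDiag_of {a b c d e f : G} (ha : a = e ^ n * c * (e ^ n)⁻¹)
    (he : e = c ^ n * d * (c ^ n)⁻¹) (hc : c = d ^ n * e * (d ^ n)⁻¹)
    (hf : f = d ^ n * b * (d ^ n)⁻¹) (hb : b = f ^ n * d * (f ^ n)⁻¹)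
    (ha' : a = b ^ n * f * (b ^ n)⁻¹) (i : Fin 6) :
    liftDiag ha he hc hf hb ha' (of i) = ![a, b, c, d, e, f] i :=
  toGroup.of _

def liftGnSK {b d e : G} (hb : b * d ^ n * b ^ n = d ^ n * b ^ n * d)
    (he : e * d ^ n * e ^ n = d ^ n * e ^ n * d)
    (hbe : e ^ n * d ^ n * e * (d ^ n)⁻¹ * (e ^ n)⁻¹ = b ^ n * d ^ n * b * (d ^ n)⁻¹ * (b ^ n)⁻¹) :
    PresentedGroup (GnSKRels n) →* G :=
  toGroup (f := ![b, d, e]) <| by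
    simp only [GnSKRels, Set.mem_insert_iff, Set.mem_singleton_iff, forall_eq_or_imp,
      forall_eq, map_mul, map_inv, map_pow, FreeGroup.lift_apply_of, mul_inv_eq_one]
    exact ⟨hb, he, hbe⟩

@[simp]
theorem liftGnSK_of {b d e : G} (hb : b * d ^ n * b ^ n = d ^ n * b ^ n * d)
    (he : e * d ^ n * e ^ n = d ^ n * e ^ n * d)
    (hbe : e ^ n * d ^ n * e * (d ^ n)⁻¹ * (e ^ n)⁻¹ = b ^ n * d ^ n * b * (d ^ n)⁻¹ * (b ^ n)⁻¹)
    (i : Fin 3) : liftGnSK hb he hbe (of i) = ![b, d, e] i :=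
  toGroup.of _

end Lifts

theorem diag_rels (n : ℕ) :
    let a : PresentedGroup (squareKnotDiagRels n) := of 0
    let b : PresentedGroup (squareKnotDiagRels n) := of 1
    let c : PresentedGroup (squareKnotDiagRels n) := of 2
    let d : PresentedGroup (squareKnotDiagRels n) := of 3
    let e : PresentedGroup (squareKnotDiagRels n) := of 4
    let f : PresentedGroup (squareKnotDiagRels n) := of 5
    a = e ^ n * c * (e ^ n)⁻¹ ∧ e = c ^ n * d * (c ^ n)⁻¹ ∧ c = d ^ n * e * (d ^ n)⁻¹ ∧
      f = d ^ n * b * (d ^ n)⁻¹ ∧ b = f ^ n * d * (f ^ n)⁻¹ ∧ a = b ^ n * f * (b ^ n)⁻¹ := by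
  refine ⟨?_, ?_, ?_, ?_, ?_, ?_⟩ <;>
    simp only [of, ← map_pow, ← map_inv, ← map_mul] <;>
    exact mk_eq_mk_of_mul_inv_mem (by simp [squareKnotDiagRels])

theorem gnSK_rels (n : ℕ) :
    let b : PresentedGroup (GnSKRels n) := of 0
    let d : PresentedGroup (GnSKRels n) := of 1
    let e : PresentedGroup (GnSKRels n) := of 2
    b * d ^ n * b ^ n = d ^ n * b ^ n * d ∧ e * d ^ n * e ^ n = d ^ n * e ^ n * d ∧
      e ^ n * d ^ n * e * (d ^ n)⁻¹ * (e ^ n)⁻¹ = b ^ n * d ^ n * b * (d ^ n)⁻¹ * (b ^ n)⁻¹ := by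
  refine ⟨?_, ?_, ?_⟩ <;>
    simp only [of, ← map_pow, ← map_inv, ← map_mul] <;>
    exact mk_eq_mk_of_mul_inv_mem (by simp [GnSKRels])

def diagToGnSK (n : ℕ) : PresentedGroup (squareKnotDiagRels n) →* PresentedGroup (GnSKRels n) :=
  liftDiag rfl ((eq_conj_pow_conj_iff _ _ n).2 (gnSK_rels n).2.1) rfl rfl
    ((eq_conj_pow_conj_iff _ _ n).2 (gnSK_rels n).1) (by simpa only [mul_assoc] using (gnSK_rels n).2.2)

def gnSKToDiag (n : ℕ) : PresentedGroup (GnSKRels n) →* PresentedGroup (squareKnotDiagRels n) :=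
  liftGnSK (b := of 1) (d := of 3) (e := of 4)
    (by obtain ⟨-, -, -, hf, hb, -⟩ := diag_rels n; exact mul_pow_mul_pow_eq_of_eq_conj hf hb)
    (by obtain ⟨-, he, hc, -, -, -⟩ := diag_rels n; exact mul_pow_mul_pow_eq_of_eq_conj hc he)
    (by
      obtain ⟨ha, -, hc, hf, -, ha'⟩ := diag_rels n
      rw [hc] at ha
      rw [hf] at ha'
      simpa only [mul_assoc] using ha.symm.trans ha')

theorem gnSKToDiag_comp_diagToGnSK (n : ℕ) :
    (gnSKToDiag n).comp (diagToGnSK n) = MonoidHom.id _ := by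
  obtain ⟨ha, -, hc, hf, -, -⟩ := diag_rels n
  ext i
  fin_cases i <;> simp [diagToGnSK, gnSKToDiag, ← ha, ← hc, ← hf]

theorem diagToGnSK_comp_gnSKToDiag (n : ℕ) :
    (diagToGnSK n).comp (gnSKToDiag n) = MonoidHom.id _ := by
  ext i
  fin_cases i <;> simp [diagToGnSK, gnSKToDiag]

end SquareKnot

theorem stmt_3_general (n : ℕ) :
    Nonempty (PresentedGroup (squareKnotDiagRels n) ≃* PresentedGroup (GnSKRels n)) :=
  ⟨MonoidHom.toMulEquiv _ _ (SquareKnot.gnSKToDiag_comp_diagToGnSK n)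
    (SquareKnot.diagToGnSK_comp_gnSKToDiag n)⟩

theorem stmt_3 (n : ℕ) (hn : 0 < n) :
    Nonempty (PresentedGroup (squareKnotDiagRels n) ≃* PresentedGroup (GnSKRels n)) :=
  stmt_3_general n
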